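/- arXiv:1102.0705 — 7 statements merged into one kernel-verified Lean document; each statement's English description precedes it below -/
import Mathlib

section
/- Let f be a polynomial vector field on ℝ^n and p a polynomial. Define Lie derivatives inductively by L⁰_f p = p and L^k_f p = ⟨∇(L^{k-1}_f p), f⟩. If for some index i the polynomial L^{i+1}_f p belongs to the ideal ⟨L⁰_f p, L¹_f p, …, L^i_f p⟩ in ℝ[x_1,…,x_n], then for every m > i the polynomial L^m_f p belongs to the same ideal ⟨L⁰_f p, …, L^i_f p⟩. -/
/-!
A Lie derivative is a derivation, and an ideal `⟨s⟩` is stable under a derivation `D` as soon as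
`D` maps the generators `s` into `⟨s⟩`, by the Leibniz rule `D (a * g) = D a * g + a * D g`.
The hypothesis says exactly that `L_f` maps each generator `L^j_f p`, `j ≤ i`, into the ideal,
so every higher iterate `L^m_f p = L_f^(m - i) (L^i_f p)` stays in it.
-/

open MvPolynomial

/-- The Lie derivative of a polynomial `p` along the polynomial vector field `f`:
`⟨∇p, f⟩ = ∑ j, (∂p/∂x_j) * f_j`. -/
noncomputable def lieDeriv {n : ℕ} (f : Fin n → MvPolynomial (Fin n) ℝ)
    (p : MvPolynomial (Fin n) ℝ) : MvPolynomial (Fin n) ℝ :=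
  ∑ j, MvPolynomial.pderiv j p * f j

/-- Iterated Lie derivatives: `lieIter f k p = L^k_f p`. -/
noncomputable def lieIter {n : ℕ} (f : Fin n → MvPolynomial (Fin n) ℝ)
    (k : ℕ) (p : MvPolynomial (Fin n) ℝ) : MvPolynomial (Fin n) ℝ :=
  match k with
  | 0 => p
  | k + 1 => lieDeriv f (lieIter f k p)

namespace Derivation

variable {R A : Type*} [CommSemiring R] [CommSemiring A] [Algebra R A]

theorem map_mem_span_of_forall_map_mem_span (D : Derivation R A A) {s : Set A}
    (hs : ∀ g ∈ s, D g ∈ Ideal.span s) {x : A} (hx : x ∈ Ideal.span s) :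
    D x ∈ Ideal.span s := by
  induction hx using Submodule.span_induction with
  | mem g hg => exact hs g hg
  | zero => simp
  | add a b _ _ ha hb => simpa using Ideal.add_mem _ ha hb
  | smul a g hg hDg =>
    rw [smul_eq_mul, leibniz, smul_eq_mul, smul_eq_mul]
    exact Ideal.add_mem _ (Ideal.mul_mem_left _ a hDg) (Ideal.mul_mem_right _ _ hg)

theorem iterate_mem_span_of_iterate_succ_mem_span (D : Derivation R A A) (x : A) (i : ℕ)
    (h : D^[i + 1] x ∈ Ideal.span {y | ∃ j ≤ i, y = D^[j] x}) (m : ℕ) :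
    D^[m] x ∈ Ideal.span {y | ∃ j ≤ i, y = D^[j] x} := by
  set s := {y | ∃ j ≤ i, y = D^[j] x}
  have hs : ∀ g ∈ s, D g ∈ Ideal.span s := by
    rintro _ ⟨j, hj, rfl⟩
    rw [← Function.iterate_succ_apply' D j x]
    rcases hj.lt_or_eq with hj | rfl
    · exact Ideal.subset_span ⟨j + 1, hj, rfl⟩
    · exact h
  induction m with
  | zero => exact Ideal.subset_span ⟨0, i.zero_le, rfl⟩
  | succ m ih =>
    rcases le_or_gt (m + 1) i with hm | hm
    · exact Ideal.subset_span ⟨m + 1, hm, rfl⟩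
    · rw [Function.iterate_succ_apply']
      exact D.map_mem_span_of_forall_map_mem_span hs ih

end Derivation

noncomputable def lieDerivation {n : ℕ} (f : Fin n → MvPolynomial (Fin n) ℝ) :
    Derivation ℝ (MvPolynomial (Fin n) ℝ) (MvPolynomial (Fin n) ℝ) :=
  ∑ j, f j • pderiv j

theorem lieDerivation_apply {n : ℕ} (f : Fin n → MvPolynomial (Fin n) ℝ)
    (p : MvPolynomial (Fin n) ℝ) : lieDerivation f p = lieDeriv f p := by
  rw [lieDerivation, ← Derivation.coeFnAddMonoidHom_apply, map_sum, Finset.sum_apply, lieDeriv]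
  simp only [Derivation.coeFnAddMonoidHom_apply, Derivation.smul_apply, smul_eq_mul, mul_comm]

theorem lieIter_eq_iterate {n : ℕ} (f : Fin n → MvPolynomial (Fin n) ℝ) (k : ℕ)
    (p : MvPolynomial (Fin n) ℝ) : lieIter f k p = (lieDerivation f)^[k] p := by
  induction k with
  | zero => rfl
  | succ k ih => rw [Function.iterate_succ_apply', ← ih, lieDerivation_apply, lieIter]

theorem lie_derivative_fixed_point
    {n : ℕ} (f : Fin n → MvPolynomial (Fin n) ℝ) (p : MvPolynomial (Fin n) ℝ)
    (i : ℕ)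
    (h : lieIter f (i + 1) p ∈
      Ideal.span {q | ∃ j ≤ i, q = lieIter f j p}) :
    ∀ m, i < m → lieIter f m p ∈ Ideal.span {q | ∃ j ≤ i, q = lieIter f j p} := by
  simp only [lieIter_eq_iterate] at h ⊢
  exact fun m _ => (lieDerivation f).iterate_mem_span_of_iterate_succ_mem_span p i h m
end

section
/- Let f be a polynomial vector field and p a polynomial on ℝ^n. Define the pointwise rank γ_{p,f}(x) as the least k with L^k_f p(x) ≠ 0, and γ_{p,f}(x) = ∞ if no such k exists. Then there exists an integer N such that for all x ∈ ℝ^n, if γ_{p,f}(x) < ∞ then γ_{p,f}(x) ≤ N. (Rank Theorem.) -/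
open MvPolynomial

/-!
In a Noetherian ring the ideals spanned by the first `m` terms of a sequence stabilize, so every
term is a combination of the first `N` terms. Taking the sequence `L^k_f p`, a point at which
`L^0_f p, …, L^N_f p` all vanish is therefore a common zero of every `L^k_f p`.
-/

theorem exists_forall_mem_span_image_Iic {R : Type*} [Semiring R] [IsNoetherianRing R]
    (g : ℕ → R) : ∃ N, ∀ k, g k ∈ Ideal.span (g '' Set.Iic N) := by
  let I : ℕ →o Ideal R :=
    ⟨fun m => Ideal.span (g '' Set.Iic m),
      fun _ _ h => Ideal.span_mono (Set.image_mono (Set.Iic_subset_Iic.mpr h))⟩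
  obtain ⟨N, hN⟩ := monotone_stabilizes_iff_noetherian.mpr inferInstance I
  refine ⟨N, fun k => ?_⟩
  have hk : g k ∈ I (max k N) := Ideal.subset_span ⟨k, le_max_left k N, rfl⟩
  rwa [← hN _ (le_max_right k N)] at hk

theorem RingHom.map_eq_zero_of_mem_span {R S : Type*} [Semiring R] [Semiring S] (φ : R →+* S)
    {s : Set R} (hs : ∀ a ∈ s, φ a = 0) {a : R} (ha : a ∈ Ideal.span s) : φ a = 0 :=
  Ideal.span_le (I := RingHom.ker φ) |>.mpr hs ha

/-- **Rank Theorem**: there is a uniform bound `N` such that whenever the pointwise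
rank `γ_{p,f}(x)` (the least `k` with `L^k_f p(x) ≠ 0`) is finite, it is at most `N`.
Finiteness of the rank at `x` is expressed as `∃ k, L^k_f p(x) ≠ 0`, and `γ ≤ N`
as `∃ j ≤ N, L^j_f p(x) ≠ 0` (since `γ` is the least such index). -/
theorem rank_theorem
    {n : ℕ} (f : Fin n → MvPolynomial (Fin n) ℝ) (p : MvPolynomial (Fin n) ℝ) :
    ∃ N : ℕ, ∀ x : Fin n → ℝ,
      (∃ k : ℕ, MvPolynomial.eval x (lieIter f k p) ≠ 0) →
      ∃ j ≤ N, MvPolynomial.eval x (lieIter f j p) ≠ 0 := by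
  obtain ⟨N, hN⟩ := exists_forall_mem_span_image_Iic fun k => lieIter f k p
  refine ⟨N, fun x ⟨k, hk⟩ => ?_⟩
  by_contra! h
  refine hk (RingHom.map_eq_zero_of_mem_span _ ?_ (hN k))
  rintro _ ⟨j, hj, rfl⟩
  exact h j hj
end

section
/- Let f be a polynomial vector field and p a polynomial on ℝ^n, and let D_ℓ = {x ∈ ℝ^n : L^m_f p(x) = 0 for all m < ℓ}. Then there exists N such that D_ℓ = D_N for all ℓ ≥ N; moreover, every x ∈ D_N satisfies L^m_f p(x) = 0 for all m ∈ ℕ. -/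
open MvPolynomial

/-! Since `ℝ[x₁, …, xₙ]` is Noetherian (Hilbert's basis theorem), the ascending chain of
ideals `⟨L⁰p, …, L^{ℓ-1}p⟩` stabilizes at some `N`, so every `L^m p` is a combination
of `L⁰p, …, L^{N-1}p` and therefore vanishes wherever these do. -/

theorem Submodule.exists_forall_mem_span_image_Iio {R M : Type*} [Semiring R]
    [AddCommMonoid M] [Module R M] [IsNoetherian R M] (g : ℕ → M) :
    ∃ N, ∀ m, g m ∈ span R (g '' Set.Iio N) := by
  let chain : ℕ →o Submodule R M :=
    ⟨fun N => span R (g '' Set.Iio N),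
      fun _ _ h => span_mono (Set.image_mono (Set.Iio_subset_Iio h))⟩
  obtain ⟨N, hN⟩ := monotone_stabilizes_iff_noetherian.mpr ‹_› chain
  refine ⟨N, fun m => ?_⟩
  have hm : g m ∈ chain (max N (m + 1)) :=
    subset_span ⟨m, Set.mem_Iio.mpr (by omega), rfl⟩
  rwa [← hN _ (le_max_left _ _)] at hm

theorem exists_forall_map_eq_zero_of_forall_lt {R S : Type*} [Semiring R] [IsNoetherianRing R]
    [Semiring S] (g : ℕ → R) :
    ∃ N, ∀ φ : R →+* S, (∀ m < N, φ (g m) = 0) → ∀ m, φ (g m) = 0 := by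
  obtain ⟨N, hN⟩ := Submodule.exists_forall_mem_span_image_Iio (R := R) g
  refine ⟨N, fun φ hφ m => ?_⟩
  have hker : Ideal.span (g '' Set.Iio N) ≤ RingHom.ker φ := by
    rw [Ideal.span_le]
    rintro _ ⟨k, hk, rfl⟩
    exact hφ k hk
  exact hker (hN m)

/-- The descending chain `D_ℓ = {x | ∀ m < ℓ, L^m_f p(x) = 0}` stabilizes at some `N`,
and on `D_N` all Lie derivatives vanish. -/
theorem vanishing_sets_stabilize
    {n : ℕ} (f : Fin n → MvPolynomial (Fin n) ℝ) (p : MvPolynomial (Fin n) ℝ)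
    (D : ℕ → Set (Fin n → ℝ))
    (hD : ∀ ℓ, D ℓ = {x | ∀ m < ℓ, MvPolynomial.eval x (lieIter f m p) = 0}) :
    ∃ N : ℕ, (∀ ℓ, N ≤ ℓ → D ℓ = D N) ∧
      ∀ x ∈ D N, ∀ m : ℕ, MvPolynomial.eval x (lieIter f m p) = 0 := by
  obtain ⟨N, hN⟩ := exists_forall_map_eq_zero_of_forall_lt (S := ℝ) (fun m => lieIter f m p)
  have hvanish : ∀ x ∈ D N, ∀ m, eval x (lieIter f m p) = 0 := fun x hx =>
    hN (eval x) (by rwa [hD N] at hx)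
  refine ⟨N, fun ℓ hℓ => Set.Subset.antisymm ?_ ?_, hvanish⟩
  · intro x hx
    rw [hD ℓ] at hx
    rw [hD N]
    exact fun m hm => hx m (hm.trans_le hℓ)
  · intro x hx
    rw [hD ℓ]
    exact fun m _ => hvanish x hx m
end

section
/- Let p : ℝ^n → ℝ be a polynomial, f a polynomial vector field, and x(t) the solution of ẋ = f(x) with x(0) = x₀, defined on an interval around 0. If γ_{p,f}(x₀) < ∞ and L^{γ_{p,f}(x₀)}_f p(x₀) > 0, then there exists ε > 0 such that p(x(t)) > 0 for all t ∈ (0, ε). -/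
/-!
Along a trajectory, `d/dt p(x(t)) = (L_f p)(x(t))`, so `t ↦ (L^j_f p)(x(t))` is the derivative of
`t ↦ (L^(j-1)_f p)(x(t))`. A function that vanishes at `0` and whose derivative is positive just to
the right of `0` is itself positive there; starting from `L^k_f p(x₀) > 0` and descending through the
derivatives that vanish at `x₀`, positivity reaches `L^0_f p = p`. No analyticity is needed.
-/

open MvPolynomial Filter Set Topology

theorem MvPolynomial.hasDerivAt_eval_comp {𝕜 σ : Type*} [NontriviallyNormedField 𝕜] [Fintype σ]
    {x : 𝕜 → σ → 𝕜} {x' : σ → 𝕜} {t : 𝕜}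
    (hx : ∀ i, HasDerivAt (fun s => x s i) (x' i) t) (q : MvPolynomial σ 𝕜) :
    HasDerivAt (fun s => eval (x s) q) (∑ j, eval (x t) (pderiv j q) * x' j) t := by
  classical
  induction q using MvPolynomial.induction_on with
  | C a => simpa using hasDerivAt_const t a
  | add q r hq hr =>
    simpa [Pi.add_def, mul_add, add_mul, Finset.sum_add_distrib] using hq.add hr
  | mul_X q i hq =>
    have hsum : ∑ j, eval (x t) (pderiv j (q * X i)) * x' j
        = (∑ j, eval (x t) (pderiv j q) * x' j) * x t i + eval (x t) q * x' i := by
      simp only [Derivation.leibniz, pderiv_X, smul_eq_mul, map_add, map_mul, eval_X,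
        Pi.single_apply, add_mul, Finset.sum_add_distrib, Finset.sum_mul]
      rw [add_comm]
      congr 1
      · exact Finset.sum_congr rfl fun j _ => by ring
      · simp [mul_comm]
    rw [hsum]
    simpa [Pi.mul_def] using hq.mul (hx i)

theorem hasDerivAt_eval_lieDeriv {n : ℕ} {f : Fin n → MvPolynomial (Fin n) ℝ}
    {x : ℝ → Fin n → ℝ} {t : ℝ} (hx : ∀ i, HasDerivAt (fun s => x s i) (eval (x t) (f i)) t)
    (q : MvPolynomial (Fin n) ℝ) :
    HasDerivAt (fun s => eval (x s) q) (eval (x t) (lieDeriv f q)) t := by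
  simpa [lieDeriv, eval_sum] using hasDerivAt_eval_comp hx q

theorem eventually_pos_nhdsGT_of_hasDerivAt {g g' : ℝ → ℝ} {t₀ : ℝ}
    (hder : ∀ᶠ t in 𝓝 t₀, HasDerivAt g (g' t) t) (hg' : ∀ᶠ t in 𝓝[>] t₀, 0 < g' t)
    (hg : g t₀ = 0) : ∀ᶠ t in 𝓝[>] t₀, 0 < g t := by
  obtain ⟨u, hu, hsub⟩ :=
    mem_nhdsGT_iff_exists_Ioo_subset.1 ((hder.filter_mono nhdsWithin_le_nhds).and hg')
  have hmono : StrictMonoOn g (Ico t₀ u) := by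
    refine strictMonoOn_of_hasDerivWithinAt_pos (f' := g') (convex_Ico t₀ u) ?_ ?_ ?_
    · intro t ht
      rcases ht.1.eq_or_lt with rfl | ht₀
      · exact hder.self_of_nhds.continuousAt.continuousWithinAt
      · exact (hsub ⟨ht₀, ht.2⟩).1.continuousAt.continuousWithinAt
    · rw [interior_Ico]
      exact fun t ht => (hsub ht).1.hasDerivWithinAt
    · rw [interior_Ico]
      exact fun t ht => (hsub ht).2
  filter_upwards [Ioo_mem_nhdsGT hu] with t ht
  simpa [hg] using hmono ⟨le_rfl, hu⟩ ⟨ht.1.le, ht.2⟩ ht.1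

theorem eventually_pos_nhdsGT_of_iterated_hasDerivAt {g : ℕ → ℝ → ℝ} {t₀ : ℝ} {k : ℕ}
    (hder : ∀ j < k, ∀ᶠ t in 𝓝 t₀, HasDerivAt (g j) (g (j + 1) t) t)
    (hcont : ContinuousAt (g k) t₀) (hzero : ∀ j < k, g j t₀ = 0) (hpos : 0 < g k t₀) :
    ∀ᶠ t in 𝓝[>] t₀, 0 < g 0 t := by
  induction k generalizing g with
  | zero => exact nhdsWithin_le_nhds (hcont.eventually (lt_mem_nhds hpos))
  | succ k ih =>
    have hg₁ : ∀ᶠ t in 𝓝[>] t₀, 0 < g 1 t :=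
      ih (g := fun j => g (j + 1)) (fun j hj => hder (j + 1) (by omega)) hcont
        (fun j hj => hzero (j + 1) (by omega)) hpos
    exact eventually_pos_nhdsGT_of_hasDerivAt (hder 0 k.succ_pos) hg₁ (hzero 0 k.succ_pos)

/-- If the first nonzero Lie derivative of `p` along `f` at `x₀` is positive
(at its pointwise rank `k`), then `p` is positive along the trajectory for
small positive time. -/
theorem positive_lie_derivative_implies_locally_positive
    {n : ℕ} (f : Fin n → MvPolynomial (Fin n) ℝ) (p : MvPolynomial (Fin n) ℝ)
    (a b : ℝ) (ha : a < 0) (hb : 0 < b)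
    (x : ℝ → Fin n → ℝ) (x₀ : Fin n → ℝ)
    (hx0 : x 0 = x₀)
    (hode : ∀ t ∈ Set.Ioo a b, ∀ i : Fin n,
      HasDerivAt (fun s => x s i) (MvPolynomial.eval (x t) (f i)) t)
    (k : ℕ)
    (hleast : ∀ j < k, MvPolynomial.eval x₀ (lieIter f j p) = 0)
    (hpos : 0 < MvPolynomial.eval x₀ (lieIter f k p)) :
    ∃ ε > 0, ∀ t ∈ Set.Ioo (0:ℝ) ε, 0 < MvPolynomial.eval (x t) p := by
  subst hx0
  have hsol : ∀ᶠ t in 𝓝 0, ∀ i, HasDerivAt (fun s => x s i) (eval (x t) (f i)) t :=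
    eventually_of_mem (Ioo_mem_nhds ha hb) hode
  have hder (j : ℕ) : ∀ᶠ t in 𝓝 0, HasDerivAt (fun s => eval (x s) (lieIter f j p))
      (eval (x t) (lieIter f (j + 1) p)) t :=
    hsol.mono fun _ ht => hasDerivAt_eval_lieDeriv ht _
  have hpos_near : ∀ᶠ t in 𝓝[>] 0, 0 < eval (x t) (lieIter f 0 p) :=
    eventually_pos_nhdsGT_of_iterated_hasDerivAt (fun j _ => hder j)
      (hder k).self_of_nhds.continuousAt hleast hpos
  exact mem_nhdsGT_iff_exists_Ioo_subset.1 hpos_near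
end

section
/- Let f : ℝ^n → ℝ^n be locally Lipschitz, H ⊆ ℝ^n, Ξ ⊆ H, and P ⊆ ℝ^n. Then P is a continuous invariant of (H, f, Ξ) if and only if: (1) Ξ ⊆ P; (2) every x ∈ P ∩ H ∩ In_f(H) lies in In_f(P); and (3) every x ∈ P^c ∩ H ∩ IvIn_f(H) lies outside IvIn_f(P). -/
/-! Follow a trajectory up to its first exit time `τ` from `P`. If it is still in `P` at `τ`, the
`In_f` condition keeps it in `P` for a while after `τ`; if not, it was in `P` just before `τ`,
which the `IvIn_f` condition forbids. Local Lipschitz continuity gives uniqueness of solutions,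
hence the flow law `φ (φ x s) t = φ x (s + t)`, which is what lets `In_f` and `IvIn_f` at the point
`φ x s` speak about the trajectory of `x` near time `s`. -/

/-- `φ` is a global flow of the vector field `f`: `φ x₀ t` is the value at time `t`
of the solution of `ẋ = f(x)` with initial value `x₀`. -/
def IsFlow {n : ℕ} (f : (Fin n → ℝ) → (Fin n → ℝ))
    (φ : (Fin n → ℝ) → ℝ → (Fin n → ℝ)) : Prop :=
  (∀ x₀, φ x₀ 0 = x₀) ∧ ∀ x₀ t, HasDerivAt (φ x₀) (f (φ x₀ t)) t

/-- `In_f(A)`: points whose forward trajectory enters `A` immediately. -/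
def InSet {n : ℕ} (φ : (Fin n → ℝ) → ℝ → (Fin n → ℝ)) (A : Set (Fin n → ℝ)) :
    Set (Fin n → ℝ) :=
  {x₀ | ∃ ε > 0, ∀ t ∈ Set.Ioo (0:ℝ) ε, φ x₀ t ∈ A}

/-- `IvIn_f(A)`: points whose backward trajectory comes from inside `A`. -/
def IvInSet {n : ℕ} (φ : (Fin n → ℝ) → ℝ → (Fin n → ℝ)) (A : Set (Fin n → ℝ)) :
    Set (Fin n → ℝ) :=
  {x₀ | ∃ ε > 0, ∀ t ∈ Set.Ioo (0:ℝ) ε, φ x₀ (-t) ∈ A}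

/-- `Out_f(A)`: points whose forward trajectory leaves `A` immediately. -/
def OutSet {n : ℕ} (φ : (Fin n → ℝ) → ℝ → (Fin n → ℝ)) (A : Set (Fin n → ℝ)) :
    Set (Fin n → ℝ) :=
  {x₀ | ∃ ε > 0, ∀ t ∈ Set.Ioo (0:ℝ) ε, φ x₀ t ∉ A}

/-- `P` is a continuous invariant of the system `(H, f, Ξ)` with flow `φ`. -/
def ContinuousInvariant {n : ℕ} (φ : (Fin n → ℝ) → ℝ → (Fin n → ℝ))
    (H Ξ P : Set (Fin n → ℝ)) : Prop :=
  Ξ ⊆ P ∧ ∀ x₀ ∈ P, ∀ T : ℝ, 0 ≤ T →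
    (∀ t ∈ Set.Icc 0 T, φ x₀ t ∈ H) → ∀ t ∈ Set.Icc 0 T, φ x₀ t ∈ P

open Set

theorem LocallyLipschitz.eq_of_hasDerivAt {E : Type*} [NormedAddCommGroup E] [NormedSpace ℝ E]
    {f : E → E} (hf : LocallyLipschitz f) {g₁ g₂ : ℝ → E}
    (h₁ : ∀ t, HasDerivAt g₁ (f (g₁ t)) t) (h₂ : ∀ t, HasDerivAt g₂ (f (g₂ t)) t)
    {t₀ : ℝ} (heq : g₁ t₀ = g₂ t₀) : g₁ = g₂ := by
  have hclosed : IsClosed {t | g₁ t = g₂ t} :=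
    isClosed_eq (continuous_iff_continuousAt.2 fun t => (h₁ t).continuousAt)
      (continuous_iff_continuousAt.2 fun t => (h₂ t).continuousAt)
  have hopen : IsOpen {t | g₁ t = g₂ t} := by
    refine isOpen_iff_mem_nhds.2 fun t ht => ?_
    obtain ⟨K, s, hs, hK⟩ := hf (g₁ t)
    refine ODE_solution_unique_of_eventually (v := fun _ => f) (s := fun _ => s)
      (.of_forall fun _ => hK) ?_ ?_ ht
    · filter_upwards [(h₁ t).continuousAt.preimage_mem_nhds hs] with r hr using ⟨h₁ r, hr⟩
    · filter_upwards [(h₂ t).continuousAt.preimage_mem_nhds (ht ▸ hs)] with r hr using ⟨h₂ r, hr⟩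
  funext t
  exact eq_univ_iff_forall.1 (IsClopen.eq_univ ⟨hclosed, hopen⟩ ⟨t₀, heq⟩) t

theorem IsFlow.apply_add {n : ℕ} {f : (Fin n → ℝ) → (Fin n → ℝ)}
    {φ : (Fin n → ℝ) → ℝ → (Fin n → ℝ)} (hφ : IsFlow f φ) (hf : LocallyLipschitz f)
    (x : Fin n → ℝ) (s t : ℝ) : φ (φ x s) t = φ x (s + t) :=
  congrFun (hf.eq_of_hasDerivAt (hφ.2 (φ x s)) (fun t => (hφ.2 x (s + t)).comp_const_add s t)
    (t₀ := 0) (by rw [hφ.1, add_zero])) t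

theorem Icc_subset_of_forall_exists_Ioo_subset {α : Type*} [ConditionallyCompleteLinearOrder α]
    {S : Set α} {a b : α} (ha : a ∈ S) (hright : ∀ s ∈ S ∩ Ico a b, ∃ u > s, Ioo s u ⊆ S)
    (hleft : ∀ s ∈ Ioc a b, (∃ l < s, Ioo l s ⊆ S) → s ∈ S) : Icc a b ⊆ S := by
  by_contra hsub
  obtain ⟨c, hc⟩ : (Icc a b \ S).Nonempty := sdiff_nonempty.2 hsub
  have hbdd : BddBelow (Icc a b \ S) := ⟨a, fun t ht => ht.1.1⟩
  set τ := sInf (Icc a b \ S)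
  have haτ : a ≤ τ := le_csInf ⟨c, hc⟩ fun t ht => ht.1.1
  have hτc : τ ≤ c := csInf_le hbdd hc
  have hbefore : Ico a τ ⊆ S := fun t ht => by
    by_contra htS
    exact (csInf_le hbdd ⟨⟨ht.1, ht.2.le.trans (hτc.trans hc.1.2)⟩, htS⟩).not_gt ht.2
  have hτS : τ ∈ S := by
    rcases haτ.eq_or_lt with hτ | hτ
    · exact hτ ▸ ha
    · exact hleft τ ⟨hτ, hτc.trans hc.1.2⟩ ⟨a, hτ, Ioo_subset_Ico_self.trans hbefore⟩
  have hτc' : τ < c := hτc.lt_of_ne fun h => hc.2 (h ▸ hτS)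
  obtain ⟨u, hu, hafter⟩ := hright τ ⟨hτS, haτ, hτc'.trans_le hc.1.2⟩
  obtain ⟨d, hd, hdu⟩ := exists_lt_of_csInf_lt ⟨c, hc⟩ hu
  exact hd.2 (hafter ⟨(csInf_le hbdd hd).lt_of_ne fun h => hd.2 (h ▸ hτS), hdu⟩)

section Trajectories

variable {n : ℕ} {φ : (Fin n → ℝ) → ℝ → (Fin n → ℝ)} {x : Fin n → ℝ} {A H Ξ P : Set (Fin n → ℝ)}

theorem mem_inSet_iff_exists_Ioo_subset {s : ℝ} (hadd : ∀ t, φ (φ x s) t = φ x (s + t)) :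
    φ x s ∈ InSet φ A ↔ ∃ u > s, Ioo s u ⊆ φ x ⁻¹' A := by
  constructor
  · rintro ⟨ε, hε, h⟩
    refine ⟨s + ε, by linarith, fun t ht => ?_⟩
    have := h (t - s) ⟨by linarith [ht.1], by linarith [ht.2]⟩
    rwa [hadd, add_sub_cancel] at this
  · rintro ⟨u, hu, h⟩
    refine ⟨u - s, sub_pos.2 hu, fun t ht => ?_⟩
    rw [hadd]
    exact h ⟨by linarith [ht.1], by linarith [ht.2]⟩

theorem mem_ivInSet_iff_exists_Ioo_subset {s : ℝ} (hadd : ∀ t, φ (φ x s) t = φ x (s + t)) :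
    φ x s ∈ IvInSet φ A ↔ ∃ l < s, Ioo l s ⊆ φ x ⁻¹' A := by
  constructor
  · rintro ⟨ε, hε, h⟩
    refine ⟨s - ε, by linarith, fun t ht => ?_⟩
    have := h (s - t) ⟨by linarith [ht.2], by linarith [ht.1]⟩
    rwa [hadd, neg_sub, add_sub_cancel] at this
  · rintro ⟨l, hl, h⟩
    refine ⟨s - l, sub_pos.2 hl, fun t ht => ?_⟩
    rw [hadd]
    exact h ⟨by linarith [ht.2], by linarith [ht.1]⟩

theorem ContinuousInvariant.mem_of_Icc_subset_preimage (hP : ContinuousInvariant φ H Ξ P)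
    {a b : ℝ} (hadd : ∀ t, φ (φ x a) t = φ x (a + t)) (hx : φ x a ∈ P) (hab : a ≤ b)
    (hH : Icc a b ⊆ φ x ⁻¹' H) : φ x b ∈ P := by
  have := hP.2 (φ x a) hx (b - a) (sub_nonneg.2 hab)
    (fun t ht => by rw [hadd]; exact hH ⟨by linarith [ht.1], by linarith [ht.2]⟩)
    (b - a) ⟨sub_nonneg.2 hab, le_rfl⟩
  rwa [hadd, add_sub_cancel] at this

theorem ContinuousInvariant.inter_inSet_subset (hP : ContinuousInvariant φ H Ξ P)
    (hφ0 : ∀ x, φ x 0 = x) (hadd : ∀ x s t, φ (φ x s) t = φ x (s + t)) :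
    P ∩ H ∩ InSet φ H ⊆ InSet φ P := by
  rintro x ⟨⟨hxP, hxH⟩, hxIn⟩
  rw [← hφ0 x] at hxP hxH hxIn ⊢
  rw [mem_inSet_iff_exists_Ioo_subset (hadd x 0)] at hxIn ⊢
  obtain ⟨u, hu, hsub⟩ := hxIn
  refine ⟨u, hu, fun t ht => hP.mem_of_Icc_subset_preimage (hadd x 0) hxP ht.1.le ?_⟩
  rw [← Ioc_insert_left ht.1.le]
  exact insert_subset hxH ((Ioc_subset_Ioo_right ht.2).trans hsub)

theorem ContinuousInvariant.inter_ivInSet_subset_compl (hP : ContinuousInvariant φ H Ξ P)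
    (hφ0 : ∀ x, φ x 0 = x) (hadd : ∀ x s t, φ (φ x s) t = φ x (s + t)) :
    Pᶜ ∩ H ∩ IvInSet φ H ⊆ (IvInSet φ P)ᶜ := by
  rintro x ⟨⟨hxP, hxH⟩, hxH'⟩ hxP'
  rw [← hφ0 x] at hxP hxH hxH' hxP'
  rw [mem_ivInSet_iff_exists_Ioo_subset (hadd x 0)] at hxH' hxP'
  obtain ⟨l, hl, hH⟩ := hxH'
  obtain ⟨l', hl', hP'⟩ := hxP'
  obtain ⟨t, ht, ht0⟩ := exists_between (max_lt hl hl')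
  refine hxP (hP.mem_of_Icc_subset_preimage (hadd x t)
    (hP' ⟨(le_max_right l l').trans_lt ht, ht0⟩) ht0.le ?_)
  rw [← Ico_insert_right ht0.le]
  exact insert_subset hxH ((Ico_subset_Ioo_left ((le_max_left l l').trans_lt ht)).trans hH)

theorem continuousInvariant_of_inSet_of_ivInSet (hφ0 : ∀ x, φ x 0 = x)
    (hadd : ∀ x s t, φ (φ x s) t = φ x (s + t)) (hΞ : Ξ ⊆ P)
    (hIn : P ∩ H ∩ InSet φ H ⊆ InSet φ P) (hIvIn : Pᶜ ∩ H ∩ IvInSet φ H ⊆ (IvInSet φ P)ᶜ) :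
    ContinuousInvariant φ H Ξ P := by
  refine ⟨hΞ, fun x hx T _ hH => ?_⟩
  refine Icc_subset_of_forall_exists_Ioo_subset (S := φ x ⁻¹' P)
    (by rwa [mem_preimage, hφ0]) ?_ ?_
  · rintro s ⟨hs, hsT⟩
    have hHafter : Ioo s T ⊆ φ x ⁻¹' H :=
      (Ioo_subset_Icc_self.trans (Icc_subset_Icc_left hsT.1)).trans hH
    exact (mem_inSet_iff_exists_Ioo_subset (hadd x s)).1
      (hIn ⟨⟨hs, hH s (Ico_subset_Icc_self hsT)⟩,
        (mem_inSet_iff_exists_Ioo_subset (hadd x s)).2 ⟨T, hsT.2, hHafter⟩⟩)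
  · rintro s hsT hPbefore
    by_contra hs
    have hHbefore : Ioo 0 s ⊆ φ x ⁻¹' H :=
      (Ioo_subset_Icc_self.trans (Icc_subset_Icc_right hsT.2)).trans hH
    exact hIvIn ⟨⟨hs, hH s (Ioc_subset_Icc_self hsT)⟩,
        (mem_ivInSet_iff_exists_Ioo_subset (hadd x s)).2 ⟨0, hsT.1, hHbefore⟩⟩
      ((mem_ivInSet_iff_exists_Ioo_subset (hadd x s)).2 hPbefore)

end Trajectories

theorem continuous_invariant_iff_general
    {n : ℕ} (f : (Fin n → ℝ) → (Fin n → ℝ)) (hf : LocallyLipschitz f)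
    (φ : (Fin n → ℝ) → ℝ → (Fin n → ℝ)) (hφ : IsFlow f φ)
    (H Ξ P : Set (Fin n → ℝ)) :
    ContinuousInvariant φ H Ξ P ↔
      (Ξ ⊆ P ∧
       (∀ x ∈ P ∩ H ∩ InSet φ H, x ∈ InSet φ P) ∧
       (∀ x ∈ Pᶜ ∩ H ∩ IvInSet φ H, x ∉ IvInSet φ P)) := by
  have hadd := hφ.apply_add hf
  exact ⟨fun hP =>
      ⟨hP.1, hP.inter_inSet_subset hφ.1 hadd, hP.inter_ivInSet_subset_compl hφ.1 hadd⟩,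
    fun ⟨hΞ, hIn, hIvIn⟩ => continuousInvariant_of_inSet_of_ivInSet hφ.1 hadd hΞ hIn hIvIn⟩

/-- **Necessary and sufficient condition for continuous invariants.** -/
theorem continuous_invariant_iff
    {n : ℕ} (f : (Fin n → ℝ) → (Fin n → ℝ)) (hf : LocallyLipschitz f)
    (φ : (Fin n → ℝ) → ℝ → (Fin n → ℝ)) (hφ : IsFlow f φ)
    (H Ξ P : Set (Fin n → ℝ)) (hΞH : Ξ ⊆ H) :
    ContinuousInvariant φ H Ξ P ↔
      (Ξ ⊆ P ∧
       (∀ x ∈ P ∩ H ∩ InSet φ H, x ∈ InSet φ P) ∧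
       (∀ x ∈ Pᶜ ∩ H ∩ IvInSet φ H, x ∉ IvInSet φ P)) :=
  continuous_invariant_iff_general f hf φ hφ H Ξ P
end

section
/- Let p be a polynomial and f a polynomial vector field on ℝ^n. Then In_f({x : p(x) > 0}) = Γ₊(p,f) and In_f({x : p(x) ≥ 0}) = Γ₀(p,f) ∪ Γ₊(p,f), where Γ₀(p,f) := {x : L^k_f p(x) = 0 for all k ∈ ℕ} and Γ₊(p,f) := {x : γ_{p,f}(x) < ∞ and L^{γ_{p,f}(x)}_f p(x) > 0}. -/
/-- `φ` is a global flow of the polynomial vector field `f`. -/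
def IsPolyFlow {n : ℕ} (f : Fin n → MvPolynomial (Fin n) ℝ)
    (φ : (Fin n → ℝ) → ℝ → (Fin n → ℝ)) : Prop :=
  (∀ x₀, φ x₀ 0 = x₀) ∧
    ∀ x₀ t (i : Fin n),
      HasDerivAt (fun s => φ x₀ s i) (MvPolynomial.eval (φ x₀ t) (f i)) t

/-- `Γ₀(p,f)`: points where all Lie derivatives of `p` along `f` vanish. -/
def Gamma0 {n : ℕ} (f : Fin n → MvPolynomial (Fin n) ℝ)
    (p : MvPolynomial (Fin n) ℝ) : Set (Fin n → ℝ) :=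
  {x | ∀ k : ℕ, MvPolynomial.eval x (lieIter f k p) = 0}

/-- `Γ₊(p,f)`: points of finite pointwise rank whose first nonzero Lie
derivative is positive. -/
def GammaPlus {n : ℕ} (f : Fin n → MvPolynomial (Fin n) ℝ)
    (p : MvPolynomial (Fin n) ℝ) : Set (Fin n → ℝ) :=
  {x | ∃ k : ℕ, (∀ j < k, MvPolynomial.eval x (lieIter f j p) = 0) ∧
        0 < MvPolynomial.eval x (lieIter f k p)}

open MvPolynomial Set Filter Topology

theorem exists_mem_span_range_fin_of_isNoetherianRing {R : Type*} [Semiring R]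
    [IsNoetherianRing R] (a : ℕ → R) :
    ∃ N, a (N + 1) ∈ Ideal.span (range fun j : Fin (N + 1) => a j) := by
  let I : ℕ →o Ideal R :=
    ⟨fun k => Ideal.span (range fun j : Fin (k + 1) => a j), fun k l hkl =>
      Ideal.span_mono <| by rintro _ ⟨j, rfl⟩; exact ⟨⟨j, by omega⟩, rfl⟩⟩
  obtain ⟨N, hN⟩ := monotone_stabilizes_iff_noetherian.mpr inferInstance I
  refine ⟨N, ?_⟩
  change a (N + 1) ∈ I N
  rw [hN (N + 1) N.le_succ]
  exact Ideal.subset_span ⟨Fin.last (N + 1), rfl⟩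

theorem norm_le_of_companion {N : ℕ} {y z a : Fin (N + 1) → ℝ}
    (hshift : ∀ j : Fin N, z j.castSucc = y j.succ)
    (hlast : z (Fin.last N) = ∑ i, a i * y i) :
    ‖z‖ ≤ max 1 (∑ i, |a i|) * ‖y‖ := by
  refine (pi_norm_le_iff_of_nonneg (by positivity)).2 fun j => ?_
  induction j using Fin.lastCases with
  | last =>
    calc ‖z (Fin.last N)‖ ≤ ∑ i, |a i| * ‖y‖ := by
          rw [hlast, Real.norm_eq_abs]
          refine (Finset.abs_sum_le_sum_abs _ _).trans (Finset.sum_le_sum fun i _ => ?_)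
          rw [abs_mul]
          exact mul_le_mul_of_nonneg_left (norm_le_pi_norm y i) (abs_nonneg _)
      _ ≤ max 1 (∑ i, |a i|) * ‖y‖ := by
          rw [← Finset.sum_mul]
          exact mul_le_mul_of_nonneg_right (le_max_right _ _) (norm_nonneg _)
  | cast j =>
    calc ‖z j.castSucc‖ = ‖y j.succ‖ := by rw [hshift]
      _ ≤ 1 * ‖y‖ := (one_mul ‖y‖).symm ▸ norm_le_pi_norm y _
      _ ≤ max 1 (∑ i, |a i|) * ‖y‖ :=
          mul_le_mul_of_nonneg_right (le_max_left _ _) (norm_nonneg _)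

theorem eventually_nhdsGT_pos_of_leading_deriv_pos {g : ℕ → ℝ → ℝ} {a : ℝ} {k : ℕ}
    (hg : ∀ j t, HasDerivAt (g j) (g (j + 1) t) t) (hzero : ∀ j < k, g j a = 0)
    (hpos : 0 < g k a) : ∀ᶠ t in 𝓝[>] a, 0 < g 0 t := by
  induction k generalizing g with
  | zero =>
    exact eventually_nhdsWithin_of_eventually_nhds
      ((hg 0 a).continuousAt.eventually (lt_mem_nhds hpos))
  | succ k ih =>
    have hderiv_pos : ∀ᶠ t in 𝓝[>] a, 0 < g 1 t :=
      ih (fun j t => hg (j + 1) t) (fun j hj => hzero (j + 1) (by omega)) hpos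
    obtain ⟨u, hau, hu⟩ := mem_nhdsGT_iff_exists_Ioo_subset.1 hderiv_pos
    have hmono : StrictMonoOn (g 0) (Icc a u) := by
      refine strictMonoOn_of_hasDerivWithinAt_pos (convex_Icc a u)
        (fun t _ => (hg 0 t).continuousAt.continuousWithinAt)
        (fun t _ => (hg 0 t).hasDerivWithinAt) fun t ht => ?_
      rw [interior_Icc] at ht
      exact hu ht
    refine mem_nhdsGT_iff_exists_Ioo_subset.2 ⟨u, hau, fun t ht => ?_⟩
    have := hmono (left_mem_Icc.2 (le_of_lt hau)) (Ioo_subset_Icc_self ht) ht.1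
    rwa [hzero 0 k.succ_pos] at this

theorem mem_InSet_iff_eventually {n : ℕ} {φ : (Fin n → ℝ) → ℝ → (Fin n → ℝ)}
    {A : Set (Fin n → ℝ)} {x₀ : Fin n → ℝ} :
    x₀ ∈ InSet φ A ↔ ∀ᶠ t in 𝓝[>] 0, φ x₀ t ∈ A := by
  simp [InSet, Filter.Eventually, mem_nhdsGT_iff_exists_Ioo_subset, subset_def]

variable {n : ℕ} {f : Fin n → MvPolynomial (Fin n) ℝ}

theorem lieDeriv_C (a : ℝ) : lieDeriv f (C a) = 0 := by
  simp [lieDeriv]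

theorem lieDeriv_add (p q : MvPolynomial (Fin n) ℝ) :
    lieDeriv f (p + q) = lieDeriv f p + lieDeriv f q := by
  simp [lieDeriv, add_mul, Finset.sum_add_distrib]

theorem lieDeriv_neg (p : MvPolynomial (Fin n) ℝ) : lieDeriv f (-p) = -lieDeriv f p := by
  simp [lieDeriv]

theorem lieDeriv_mul_X (p : MvPolynomial (Fin n) ℝ) (i : Fin n) :
    lieDeriv f (p * X i) = lieDeriv f p * X i + p * f i := by
  simp only [lieDeriv, pderiv_mul, pderiv_X, Finset.sum_mul, add_mul, Finset.sum_add_distrib]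
  congr 1
  · exact Finset.sum_congr rfl fun j _ => by ring
  · simp [Pi.single_apply]

theorem lieIter_neg (k : ℕ) (p : MvPolynomial (Fin n) ℝ) :
    lieIter f k (-p) = -lieIter f k p := by
  induction k with
  | zero => rfl
  | succ k ih => exact (congrArg (lieDeriv f) ih).trans (lieDeriv_neg _)

theorem exists_lieIter_succ_eq_sum (f : Fin n → MvPolynomial (Fin n) ℝ)
    (p : MvPolynomial (Fin n) ℝ) :
    ∃ (N : ℕ) (c : Fin (N + 1) → MvPolynomial (Fin n) ℝ),
      lieIter f (N + 1) p = ∑ j, c j * lieIter f j p := by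
  obtain ⟨N, hN⟩ := exists_mem_span_range_fin_of_isNoetherianRing fun k => lieIter f k p
  obtain ⟨c, hc⟩ := Ideal.mem_span_range_iff_exists_fun.1 hN
  exact ⟨N, c, hc.symm⟩

theorem mem_Gamma0_or_mem_GammaPlus_or_mem_GammaPlus_neg (p : MvPolynomial (Fin n) ℝ)
    (x : Fin n → ℝ) : x ∈ Gamma0 f p ∨ x ∈ GammaPlus f p ∨ x ∈ GammaPlus f (-p) := by
  by_cases hx : x ∈ Gamma0 f p
  · exact Or.inl hx
  simp only [Gamma0, mem_ofPred_eq, not_forall] at hx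
  classical
  have hfirst : ∀ j < Nat.find hx, eval x (lieIter f j p) = 0 :=
    fun j hj => not_not.1 (Nat.find_min hx hj)
  rcases (Ne.lt_or_gt (Nat.find_spec hx)) with hneg | hpos
  · exact Or.inr (Or.inr ⟨Nat.find hx, by simpa [lieIter_neg] using hfirst,
      by simpa [lieIter_neg] using hneg⟩)
  · exact Or.inr (Or.inl ⟨Nat.find hx, hfirst, hpos⟩)

namespace IsPolyFlow

variable {φ : (Fin n → ℝ) → ℝ → (Fin n → ℝ)} (hφ : IsPolyFlow f φ)
include hφ

theorem hasDerivAt_eval (x₀ : Fin n → ℝ) (q : MvPolynomial (Fin n) ℝ) (t : ℝ) :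
    HasDerivAt (fun s => eval (φ x₀ s) q) (eval (φ x₀ t) (lieDeriv f q)) t := by
  induction q using MvPolynomial.induction_on with
  | C a => simpa [lieDeriv_C] using hasDerivAt_const t a
  | add p q hp hq => simpa [lieDeriv_add, Pi.add_def] using hp.add hq
  | mul_X p i hp =>
    simpa [lieDeriv_mul_X, Pi.mul_def, mul_comm, mul_left_comm] using hp.mul (hφ.2 x₀ t i)

theorem eventually_pos_of_mem_GammaPlus {p : MvPolynomial (Fin n) ℝ} {x₀ : Fin n → ℝ}
    (hx : x₀ ∈ GammaPlus f p) : ∀ᶠ t in 𝓝[>] 0, 0 < eval (φ x₀ t) p := by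
  obtain ⟨k, hzero, hpos⟩ := hx
  exact eventually_nhdsGT_pos_of_leading_deriv_pos (g := fun j t => eval (φ x₀ t) (lieIter f j p))
    (fun j t => hφ.hasDerivAt_eval x₀ _ t) (by simpa [hφ.1 x₀] using hzero)
    (by simpa [hφ.1 x₀] using hpos)

theorem eval_eq_zero_of_mem_Gamma0 {p : MvPolynomial (Fin n) ℝ} {x₀ : Fin n → ℝ}
    (hx : x₀ ∈ Gamma0 f p) {t : ℝ} (ht : 0 ≤ t) : eval (φ x₀ t) p = 0 := by
  obtain ⟨N, c, hc⟩ := exists_lieIter_succ_eq_sum f p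
  let h : ℝ → Fin (N + 1) → ℝ := fun s j => eval (φ x₀ s) (lieIter f j p)
  let h' : ℝ → Fin (N + 1) → ℝ := fun s j => eval (φ x₀ s) (lieIter f (j + 1) p)
  have hderiv : ∀ s, HasDerivAt h (h' s) s :=
    fun s => hasDerivAt_pi.2 fun j => hφ.hasDerivAt_eval x₀ _ s
  have hcoeff : Continuous fun s => ∑ i, |eval (φ x₀ s) (c i)| :=
    continuous_finsetSum _ fun i _ => continuous_iff_continuousAt.2
      fun s => (hφ.hasDerivAt_eval x₀ (c i) s).continuousAt.abs
  obtain ⟨C, hC⟩ := (isCompact_Icc : IsCompact (Icc 0 t)).exists_bound_of_continuousOn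
    hcoeff.continuousOn
  have hbound : ∀ s ∈ Ico 0 t, ‖h' s‖ ≤ max 1 C * ‖h s‖ := by
    intro s hs
    refine (norm_le_of_companion (a := fun i => eval (φ x₀ s) (c i)) (fun j => rfl)
      (by simp [h, h', hc])).trans (mul_le_mul_of_nonneg_right ?_ (norm_nonneg _))
    exact max_le_max le_rfl ((le_abs_self _).trans (hC s (Ico_subset_Icc_self hs)))
  have hzero := eq_zero_of_abs_deriv_le_mul_abs_self_of_eq_zero_right
    (fun s _ => (hderiv s).continuousAt.continuousWithinAt)
    (fun s _ => (hderiv s).hasDerivWithinAt) (funext fun j => by simpa [h, hφ.1 x₀] using hx j)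
    hbound t ⟨ht, le_rfl⟩
  exact congrFun hzero 0

end IsPolyFlow

/-- Characterization of the immediate-entry sets of `{p > 0}` and `{p ≥ 0}` via
first nonzero Lie derivatives. -/
theorem in_set_atomic_characterization
    {n : ℕ} (f : Fin n → MvPolynomial (Fin n) ℝ) (p : MvPolynomial (Fin n) ℝ)
    (φ : (Fin n → ℝ) → ℝ → (Fin n → ℝ)) (hφ : IsPolyFlow f φ) :
    InSet φ {x | 0 < MvPolynomial.eval x p} = GammaPlus f p ∧
    InSet φ {x | 0 ≤ MvPolynomial.eval x p} = Gamma0 f p ∪ GammaPlus f p := by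
  have hzero (x₀) (hx : x₀ ∈ Gamma0 f p) : ∀ᶠ t in 𝓝[>] 0, eval (φ x₀ t) p = 0 :=
    eventually_nhdsWithin_of_forall fun _ ht => hφ.eval_eq_zero_of_mem_Gamma0 hx (le_of_lt ht)
  have hneg (x₀) (hx : x₀ ∈ GammaPlus f (-p)) : ∀ᶠ t in 𝓝[>] 0, eval (φ x₀ t) p < 0 :=
    (hφ.eventually_pos_of_mem_GammaPlus hx).mono fun _ ht => by simpa using ht
  constructor <;> ext x₀ <;> simp only [mem_InSet_iff_eventually, mem_ofPred_eq, mem_union]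
  · refine ⟨fun hin => ?_, hφ.eventually_pos_of_mem_GammaPlus⟩
    rcases mem_Gamma0_or_mem_GammaPlus_or_mem_GammaPlus_neg p x₀ with h0 | hplus | hminus
    · obtain ⟨t, hpos, hz⟩ := (hin.and (hzero x₀ h0)).exists
      exact absurd hpos hz.not_gt
    · exact hplus
    · obtain ⟨t, hpos, hn⟩ := (hin.and (hneg x₀ hminus)).exists
      exact absurd hpos hn.not_gt
  · refine ⟨fun hin => ?_, ?_⟩
    · rcases mem_Gamma0_or_mem_GammaPlus_or_mem_GammaPlus_neg p x₀ with h0 | hplus | hminus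
      · exact Or.inl h0
      · exact Or.inr hplus
      · obtain ⟨t, hnn, hn⟩ := (hin.and (hneg x₀ hminus)).exists
        exact absurd hnn hn.not_ge
    · rintro (h0 | hplus)
      · exact (hzero x₀ h0).mono fun _ ht => ht.ge
      · exact (hφ.eventually_pos_of_mem_GammaPlus hplus).mono fun _ ht => ht.le
end

section
/- Consider ẋ = f(x) with f(x,y) = (−2y, x²) on ℝ², domain H = ℝ², and initial set Ξ = {(x,y) : x + y ≥ 0}. The set P = {(x,y) : x ≥ −1 ∨ y > −1/2} is a continuous invariant of (H, f, Ξ): Ξ ⊆ P, and every forward trajectory starting in P remains in P. -/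
/-!
Since `ẏ = x² ≥ 0`, `y` never decreases. So if `y t ≤ -1/2`, then `y ≤ -1/2` on all of `[0, t]`,
where `ẋ = -2y > 0`; hence `x` increases on `[0, t]` too, and a trajectory that starts in `P`
cannot be in the complement `{x < -1, y ≤ -1/2}` at time `t`.
-/

section Trajectory

variable {x y : ℝ → ℝ}

lemma monotone_of_hasDerivAt_sq (hy : ∀ t, HasDerivAt y (x t ^ 2) t) : Monotone y :=
  monotone_of_hasDerivAt_nonneg hy fun t => sq_nonneg (x t)

lemma monotoneOn_Iic_of_hasDerivAt_neg_two_mul (hx : ∀ t, HasDerivAt x (-2 * y t) t) {T : ℝ}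
    (hy : ∀ s ≤ T, y s ≤ 0) : MonotoneOn x (Set.Iic T) := by
  refine monotoneOn_of_hasDerivWithinAt_nonneg (convex_Iic T)
    (fun s _ => (hx s).continuousAt.continuousWithinAt) (fun s _ => (hx s).hasDerivWithinAt)
    fun s hs => ?_
  have := hy s (interior_subset (s := Set.Iic T) hs)
  linarith

end Trajectory

/-- For the system `ẋ = -2y, ẏ = x²` on `ℝ²` with domain `H = ℝ²` and initial set
`Ξ = {(x,y) | x + y ≥ 0}`, the set `P = {(x,y) | x ≥ -1 ∨ y > -1/2}` is a
continuous invariant: `Ξ ⊆ P` and every forward trajectory starting in `P`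
remains in `P`. -/
theorem sai_example_union_open_closed :
    (∀ x₀ y₀ : ℝ, x₀ + y₀ ≥ 0 → (x₀ ≥ -1 ∨ y₀ > -(1/2 : ℝ))) ∧
    ∀ (x y : ℝ → ℝ),
      (∀ t : ℝ, HasDerivAt x (-2 * y t) t) →
      (∀ t : ℝ, HasDerivAt y ((x t) ^ 2) t) →
      (x 0 ≥ -1 ∨ y 0 > -(1/2 : ℝ)) →
      ∀ t : ℝ, 0 ≤ t → (x t ≥ -1 ∨ y t > -(1/2 : ℝ)) := by
  refine ⟨fun x₀ y₀ h => (le_or_gt y₀ _).imp_left fun hy₀ => by linarith, ?_⟩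
  intro x y hx hy h0 t ht
  have hy_mono := monotone_of_hasDerivAt_sq hy
  rcases le_or_gt (y t) (-(1/2 : ℝ)) with hyt | hyt
  · have hx_mono := monotoneOn_Iic_of_hasDerivAt_neg_two_mul hx (T := t) fun s hs => by
      linarith [hy_mono hs]
    rcases h0 with hx0 | hy0
    · exact Or.inl (hx0.trans (hx_mono ht Set.self_mem_Iic ht))
    · linarith [hy_mono ht]
  · exact Or.inr hyt
end
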